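/- arXiv:0809.0533 — 2 statements merged into one kernel-verified Lean document; each statement's English description precedes it below -/
import Mathlib

section
/- Assume 0 < R_I < d and d − R_I < r_I + R_p < d + R_I. Then Q = π r_I² − 2 ∫_{d−R_I}^{r_I+R_p} (S_I(r, R_p, r_I)/(π R_p²)) · r · arccos((d² + r² − R_I²)/(2 d r)) dr. -/
/-!
A rigid motion of the plane takes `a` to the origin and `b` to `(d, 0)`, so the integral becomes
`∫_{D(0,R)} g − ∫_{D(0,R) ∩ D((d,0),R_I)} g` with `R = r_I + R_p`. Since `S_I(‖x‖, R_p, r_I)`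
vanishes for `‖x‖ > R`, the first term is `∫_{ℝ²} |D(x, R_p) ∩ D(0, r_I)| dx / (π R_p²)`, which is
`π r_I²` by Tonelli.
The second is computed in polar coordinates: by the law of cosines the circle of radius `r` meets
`D((d,0), R_I)` in the arc `cos θ ≥ (d² + r² − R_I²)/(2dr)`, of angular measure `2 arccos(…)`, which
is empty for `r < d − R_I`.
-/

open MeasureTheory Metric Real

noncomputable def SI (d r₁ r₂ : ℝ) : ℝ :=
  (volume (closedBall (0 : EuclideanSpace ℝ (Fin 2)) r₁ ∩
    closedBall (EuclideanSpace.single (0 : Fin 2) d) r₂)).toReal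

open Set

local notation "ℝ²" => EuclideanSpace ℝ (Fin 2)

section RigidMotion

variable {E : Type*} [NormedAddCommGroup E] [InnerProductSpace ℝ E] [FiniteDimensional ℝ E]
  [MeasurableSpace E] [BorelSpace E]

theorem exists_isometryEquiv_measurePreserving_of_dist_eq {x y x' y' : E}
    (h : dist x y = dist x' y') :
    ∃ f : E ≃ᵢ E, MeasurePreserving f volume volume ∧ f x = x' ∧ f y = y' := by
  have hnorm : ‖y - x‖ = ‖y' - x'‖ := by
    rw [← dist_eq_norm, ← dist_eq_norm, dist_comm, h, dist_comm]
  set L := (ℝ ∙ (y - x - (y' - x')))ᗮ.reflection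
  refine ⟨(IsometryEquiv.subRight x).trans (L.toIsometryEquiv.trans (IsometryEquiv.addLeft x')),
    ((measurePreserving_add_left volume x').comp L.measurePreserving).comp
      (measurePreserving_sub_right volume x), ?_, ?_⟩
  · simp
  · simp [L, Submodule.reflection_sub hnorm]

theorem setIntegral_closedBall_sdiff_closedBall_comp_dist {x y x' y' : E}
    (h : dist x y = dist x' y') (g : ℝ → ℝ) (R ρ : ℝ) :
    ∫ z in closedBall x R \ closedBall y ρ, g (dist z x)
      = ∫ z in closedBall x' R \ closedBall y' ρ, g (dist z x') := by
  obtain ⟨f, hf, hfx, hfy⟩ := exists_isometryEquiv_measurePreserving_of_dist_eq h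
  have hpre : f ⁻¹' (closedBall x' R \ closedBall y' ρ) = closedBall x R \ closedBall y ρ := by
    rw [preimage_sdiff, f.preimage_closedBall, f.preimage_closedBall,
      f.symm_apply_eq.2 hfx.symm, f.symm_apply_eq.2 hfy.symm]
  calc ∫ z in closedBall x R \ closedBall y ρ, g (dist z x)
      = ∫ z in f ⁻¹' (closedBall x' R \ closedBall y' ρ), g (dist (f z) x') := by
        simp_rw [hpre, ← hfx, f.dist_eq]
    _ = _ := hf.setIntegral_preimage_emb f.toHomeomorph.measurableEmbedding
          (fun w => g (dist w x')) _

end RigidMotion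

theorem SI_dist (x y : ℝ²) (r₁ r₂ : ℝ) :
    SI (dist x y) r₁ r₂ = volume.real (closedBall x r₁ ∩ closedBall y r₂) := by
  have h : dist (0 : ℝ²) (EuclideanSpace.single 0 (dist x y)) = dist x y := by
    simp [EuclideanSpace.dist_eq]
  obtain ⟨f, hf, hf0, hfd⟩ := exists_isometryEquiv_measurePreserving_of_dist_eq h
  have hpre : f ⁻¹' (closedBall x r₁ ∩ closedBall y r₂)
      = closedBall 0 r₁ ∩ closedBall (EuclideanSpace.single 0 (dist x y)) r₂ := by
    rw [preimage_inter, f.preimage_closedBall, f.preimage_closedBall,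
      f.symm_apply_eq.2 hf0.symm, f.symm_apply_eq.2 hfd.symm]
  rw [SI, measureReal_def, ← hpre,
    hf.measure_preimage (measurableSet_closedBall.inter measurableSet_closedBall).nullMeasurableSet]

section BallConvolution

variable {E : Type*} [NormedAddCommGroup E] [MeasurableSpace E] [BorelSpace E]
  [SecondCountableTopology E] {μ : Measure E} {s : Set E}

theorem measurableSet_setOf_mem_closedBall_inter (r : ℝ) (hs : MeasurableSet s) :
    MeasurableSet {p : E × E | p.2 ∈ closedBall p.1 r ∩ s} :=
  (measurableSet_le (measurable_snd.dist measurable_fst) measurable_const).inter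
    (measurable_snd hs)

theorem measurable_measure_closedBall_inter [SFinite μ] (r : ℝ) (hs : MeasurableSet s) :
    Measurable fun x => μ (closedBall x r ∩ s) :=
  measurable_measure_prodMk_left (measurableSet_setOf_mem_closedBall_inter r hs)

theorem lintegral_measure_closedBall_inter [SFinite μ] [μ.IsAddHaarMeasure] (r : ℝ)
    (hs : MeasurableSet s) :
    ∫⁻ x, μ (closedBall x r ∩ s) ∂μ = μ (closedBall 0 r) * μ s := by
  have ht := measurableSet_setOf_mem_closedBall_inter r hs
  calc ∫⁻ x, μ (closedBall x r ∩ s) ∂μ = μ.prod μ {p : E × E | p.2 ∈ closedBall p.1 r ∩ s} :=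
        (Measure.prod_apply ht).symm
    _ = ∫⁻ z, s.indicator (fun _ => μ (closedBall 0 r)) z ∂μ := by
        rw [Measure.prod_apply_symm ht]
        refine lintegral_congr fun z => ?_
        by_cases hz : z ∈ s
        · have hfiber : (fun x => (x, z)) ⁻¹' {p : E × E | p.2 ∈ closedBall p.1 r ∩ s}
              = closedBall z r := by
            ext x; simp [hz, dist_comm]
          rw [hfiber, indicator_of_mem hz, μ.addHaar_closedBall_center]
        · have hfiber : (fun x => (x, z)) ⁻¹' {p : E × E | p.2 ∈ closedBall p.1 r ∩ s} = ∅ := by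
            ext x; simp [hz]
          rw [hfiber, indicator_of_notMem hz, measure_empty]
    _ = μ (closedBall 0 r) * μ s := lintegral_indicator_const hs _

end BallConvolution

theorem measurable_SI (r₁ r₂ : ℝ) : Measurable fun d => SI d r₁ r₂ := by
  have hsingle : Continuous fun d : ℝ => EuclideanSpace.single (0 : Fin 2) d :=
    (Isometry.of_dist_eq fun a b => PiLp.dist_single_same 2 (fun _ => ℝ) 0 a b).continuous
  simp only [SI, inter_comm (closedBall (0 : ℝ²) r₁)]
  exact ((measurable_measure_closedBall_inter r₂ measurableSet_closedBall).comp
    hsingle.measurable).ennreal_toReal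

theorem SI_nonneg (d r₁ r₂ : ℝ) : 0 ≤ SI d r₁ r₂ := ENNReal.toReal_nonneg

theorem SI_le (d r₁ : ℝ) {r₂ : ℝ} (h₂ : 0 ≤ r₂) : SI d r₁ r₂ ≤ π * r₂ ^ 2 := by
  calc SI d r₁ r₂ ≤ volume.real (closedBall (EuclideanSpace.single (0 : Fin 2) d) r₂) :=
        measureReal_mono inter_subset_right measure_closedBall_lt_top.ne
    _ = π * r₂ ^ 2 := by
        simp [measureReal_def, ENNReal.toReal_ofReal h₂, pi_nonneg, mul_comm]

theorem SI_eq_zero_of_add_lt {d r₁ r₂ : ℝ} (h : r₁ + r₂ < d) : SI d r₁ r₂ = 0 := by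
  have hdisj := closedBall_disjoint_closedBall (x := (0 : ℝ²))
    (y := EuclideanSpace.single 0 d) (δ := r₁) (ε := r₂) (by simpa using h.trans_le (le_abs_self d))
  simp [SI, hdisj.inter_eq]

theorem integral_SI_norm {r₁ r₂ : ℝ} (h₁ : 0 ≤ r₁) (h₂ : 0 ≤ r₂) :
    ∫ y : ℝ², SI ‖y‖ r₁ r₂ = π * r₁ ^ 2 * (π * r₂ ^ 2) := by
  have hSI (y : ℝ²) : SI ‖y‖ r₁ r₂ = volume.real (closedBall y r₁ ∩ closedBall 0 r₂) := by
    rw [← dist_zero_right, SI_dist]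
  have hfin : ∀ᵐ y : ℝ², volume (closedBall y r₁ ∩ closedBall 0 r₂) < ⊤ :=
    .of_forall fun y => (measure_mono inter_subset_right).trans_lt measure_closedBall_lt_top
  simp_rw [hSI, measureReal_def]
  rw [integral_toReal (measurable_measure_closedBall_inter r₁ measurableSet_closedBall).aemeasurable
    hfin, lintegral_measure_closedBall_inter r₁ measurableSet_closedBall]
  simp only [EuclideanSpace.volume_closedBall_fin_two, ENNReal.toReal_mul, ENNReal.toReal_pow,
    ENNReal.toReal_ofReal, h₁, h₂, pi_nonneg]
  ring

theorem setIntegral_closedBall_SI_norm {r₁ r₂ : ℝ} (h₁ : 0 ≤ r₁) (h₂ : 0 ≤ r₂) :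
    ∫ y in closedBall (0 : ℝ²) (r₂ + r₁), SI ‖y‖ r₁ r₂ = π * r₁ ^ 2 * (π * r₂ ^ 2) := by
  rw [setIntegral_eq_integral_of_forall_compl_eq_zero fun y hy =>
    SI_eq_zero_of_add_lt (by simpa [add_comm] using hy), integral_SI_norm h₁ h₂]

noncomputable def toPlane : ℝ × ℝ ≃ᵐ ℝ² :=
  MeasurableEquiv.finTwoArrow.symm.trans (MeasurableEquiv.toLp 2 (Fin 2 → ℝ))

theorem measurePreserving_toPlane : MeasurePreserving toPlane volume volume :=
  (PiLp.volume_preserving_toLp (Fin 2)).comp (volume_preserving_finTwoArrow ℝ).symm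

noncomputable def polarPoint (r θ : ℝ) : ℝ² := !₂[r * cos θ, r * sin θ]

theorem norm_polarPoint {r : ℝ} (hr : 0 ≤ r) (θ : ℝ) : ‖polarPoint r θ‖ = r := by
  rw [EuclideanSpace.norm_eq]
  conv_rhs => rw [← sqrt_sq hr]
  congr 1
  simp only [polarPoint, norm_eq_abs, sq_abs, Fin.sum_univ_two, Matrix.cons_val_zero,
    Matrix.cons_val_one, Matrix.cons_val_fin_one, mul_pow]
  linear_combination r ^ 2 * sin_sq_add_cos_sq θ

theorem dist_polarPoint_single_sq (r θ d : ℝ) :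
    dist (polarPoint r θ) (EuclideanSpace.single 0 d) ^ 2 = r ^ 2 + d ^ 2 - 2 * d * r * cos θ := by
  rw [EuclideanSpace.dist_eq, sq_sqrt (by positivity)]
  simp only [polarPoint, PiLp.single_apply, dist_eq, sq_abs, Fin.sum_univ_two, Matrix.cons_val_zero,
    Matrix.cons_val_one, Matrix.cons_val_fin_one, if_pos, one_ne_zero, if_false, sub_zero]
  linear_combination r ^ 2 * sin_sq_add_cos_sq θ

theorem integrableOn_Ioc_prod_Ioo_polarCoord_symm {f : ℝ × ℝ → ℝ} (hf : Measurable f) {C : ℝ}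
    (hfC : ∀ p, ‖f p‖ ≤ C) (R : ℝ) :
    IntegrableOn (fun q : ℝ × ℝ => q.1 • f (polarCoord.symm q)) (Ioc 0 R ×ˢ Ioo (-π) π) := by
  refine Measure.integrableOn_of_bounded (M := R * C) ?_
    (measurable_fst.smul (hf.comp continuous_polarCoord_symm.measurable)).aestronglyMeasurable ?_
  · simp [Measure.volume_eq_prod, Measure.prod_prod, ENNReal.mul_eq_top]
  · refine (ae_restrict_iff' (measurableSet_Ioc.prod measurableSet_Ioo)).2
      (.of_forall fun q ⟨⟨hq0, hqR⟩, _⟩ => ?_)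
    rw [norm_smul, Real.norm_of_nonneg hq0.le]
    exact mul_le_mul hqR (hfC _) (norm_nonneg _) (hq0.le.trans hqR)

theorem setIntegral_comp_norm_of_subset_closedBall {s : Set ℝ²} (hs : MeasurableSet s) {R : ℝ}
    (hsR : s ⊆ closedBall 0 R) {F : ℝ → ℝ} (hF : Measurable F) {C : ℝ} (hFC : ∀ r, |F r| ≤ C) :
    ∫ y in s, F ‖y‖
      = ∫ r in Ioc 0 R, r * F r * volume.real (Ioo (-π) π ∩ {θ | polarPoint r θ ∈ s}) := by
  set f : ℝ × ℝ → ℝ := fun p => s.indicator (fun y => F ‖y‖) (toPlane p)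
  have hf_polar (r θ : ℝ) (hr : 0 ≤ r) :
      f (polarCoord.symm (r, θ)) = {θ | polarPoint r θ ∈ s}.indicator (fun _ => F r) θ := by
    change s.indicator (fun y => F ‖y‖) (polarPoint r θ) = _
    by_cases h : polarPoint r θ ∈ s
    · rw [indicator_of_mem h, indicator_of_mem (show θ ∈ {θ | polarPoint r θ ∈ s} from h),
        norm_polarPoint hr]
    · rw [indicator_of_notMem h, indicator_of_notMem (show θ ∉ {θ | polarPoint r θ ∈ s} from h)]
  have hint := integrableOn_Ioc_prod_Ioo_polarCoord_symm
    ((hF.comp measurable_norm).indicator hs |>.comp toPlane.measurable)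
    (fun p => (norm_indicator_le_norm_self _ _).trans (hFC _)) R
  calc ∫ y in s, F ‖y‖ = ∫ p, f p := by
        rw [← integral_indicator hs]
        exact (measurePreserving_toPlane.integral_comp' _).symm
    _ = ∫ q in polarCoord.target, q.1 • f (polarCoord.symm q) :=
        (integral_comp_polarCoord_symm f).symm
    _ = ∫ q in Ioc 0 R ×ˢ Ioo (-π) π, q.1 • f (polarCoord.symm q) := by
        refine setIntegral_eq_of_subset_of_forall_sdiff_eq_zero polarCoord.open_target.measurableSet
          (prod_mono Ioc_subset_Ioi_self subset_rfl) fun ⟨r, θ⟩ ⟨⟨hr, hθ⟩, hbox⟩ => ?_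
        have hnot : θ ∉ {θ | polarPoint r θ ∈ s} := fun h => by
          have hle := hsR h
          rw [mem_closedBall, dist_zero_right, norm_polarPoint hr.le] at hle
          exact hbox ⟨⟨hr, hle⟩, hθ⟩
        rw [hf_polar r θ hr.le, indicator_of_notMem hnot, smul_zero]
    _ = ∫ r in Ioc 0 R, ∫ θ in Ioo (-π) π, r • f (polarCoord.symm (r, θ)) := by
        rw [Measure.volume_eq_prod, setIntegral_prod _ (by rwa [← Measure.volume_eq_prod])]
    _ = _ := by
        refine setIntegral_congr_fun measurableSet_Ioc fun r hr => ?_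
        have hmeas : MeasurableSet {θ | polarPoint r θ ∈ s} :=
          hs.preimage (toPlane.measurable.comp (continuous_polarCoord_symm.comp
            (Continuous.prodMk_right r)).measurable)
        simp_rw [hf_polar r _ hr.1.le, ← indicator_const_smul]
        rw [setIntegral_indicator hmeas, setIntegral_const, smul_eq_mul, smul_eq_mul]
        ring

theorem le_cos_iff_abs_le_arccos {u θ : ℝ} (hu : u ≤ 1) (hθ : |θ| ≤ π) :
    u ≤ cos θ ↔ |θ| ≤ arccos u := by
  rcases lt_or_ge u (-1) with hu' | hu'
  · simp only [arccos_of_le_neg_one hu'.le, hθ, iff_true]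
    linarith [neg_one_le_cos θ]
  · calc u ≤ cos θ ↔ cos (arccos u) ≤ cos |θ| := by rw [cos_abs, cos_arccos hu' hu]
      _ ↔ |θ| ≤ arccos u :=
        strictAntiOn_cos.le_iff_ge ⟨arccos_nonneg u, arccos_le_pi u⟩ ⟨abs_nonneg θ, hθ⟩

theorem volume_real_Ioo_inter_setOf_le_cos (u : ℝ) :
    volume.real (Ioo (-π) π ∩ {θ | u ≤ cos θ}) = 2 * arccos u := by
  rcases lt_or_ge 1 u with hu | hu
  · have hempty : Ioo (-π) π ∩ {θ | u ≤ cos θ} = ∅ :=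
      eq_empty_of_forall_notMem fun θ hθ => (hu.trans_le hθ.2).not_ge (cos_le_one θ)
    rw [hempty, measureReal_empty, arccos_eq_zero.2 hu.le, mul_zero]
  · have hIcc : Icc (-π) π ∩ {θ | u ≤ cos θ} = Icc (-arccos u) (arccos u) := by
      ext θ
      simp only [mem_inter_iff, mem_Icc, mem_ofPred_eq, ← abs_le]
      exact ⟨fun h => (le_cos_iff_abs_le_arccos hu h.1).1 h.2, fun h =>
        ⟨h.trans (arccos_le_pi u), (le_cos_iff_abs_le_arccos hu (h.trans (arccos_le_pi u))).2 h⟩⟩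
    rw [measureReal_congr ((Ioo_ae_eq_Icc (μ := volume)).inter (ae_eq_refl {θ | u ≤ cos θ})), hIcc,
      volume_real_Icc_of_le (neg_le_self (arccos_nonneg u))]
    ring

theorem polarPoint_mem_closedBall_single_iff {r θ d ρ : ℝ} (hr : 0 < r) (hd : 0 < d) (hρ : 0 ≤ ρ) :
    polarPoint r θ ∈ closedBall (EuclideanSpace.single 0 d) ρ
      ↔ (d ^ 2 + r ^ 2 - ρ ^ 2) / (2 * d * r) ≤ cos θ := by
  rw [mem_closedBall, ← sq_le_sq₀ dist_nonneg hρ, dist_polarPoint_single_sq,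
    div_le_iff₀ (by positivity)]
  constructor <;> intro h <;> linarith

theorem setIntegral_lens_comp_norm {F : ℝ → ℝ} (hF : Measurable F) {C : ℝ} (hFC : ∀ r, |F r| ≤ C)
    {R d ρ : ℝ} (hρ : 0 ≤ ρ) (hρd : ρ < d) (hR : d - ρ ≤ R) :
    ∫ y in closedBall 0 R ∩ closedBall (EuclideanSpace.single (0 : Fin 2) d) ρ, F ‖y‖
      = 2 * ∫ r in (d - ρ)..R, F r * r * arccos ((d ^ 2 + r ^ 2 - ρ ^ 2) / (2 * d * r)) := by
  have hd : 0 < d := hρ.trans_lt hρd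
  set u : ℝ → ℝ := fun r => (d ^ 2 + r ^ 2 - ρ ^ 2) / (2 * d * r)
  have hangles : EqOn
      (fun r => r * F r * volume.real (Ioo (-π) π ∩
        {θ | polarPoint r θ ∈ closedBall 0 R ∩ closedBall (EuclideanSpace.single 0 d) ρ}))
      (fun r => 2 * (F r * r * arccos (u r))) (Ioc 0 R) := fun r hr => by
    have hset : {θ | polarPoint r θ ∈ closedBall 0 R ∩ closedBall (EuclideanSpace.single 0 d) ρ}
        = {θ | u r ≤ cos θ} := by
      ext θ
      simp only [mem_ofPred_eq, mem_inter_iff, mem_closedBall, dist_zero_right,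
        norm_polarPoint hr.1.le, hr.2, true_and]
      exact polarPoint_mem_closedBall_single_iff hr.1 hd hρ
    simp only [hset, volume_real_Ioo_inter_setOf_le_cos]
    ring
  have hvanish : ∀ r ∈ Ioc 0 R \ Ioc (d - ρ) R, 2 * (F r * r * arccos (u r)) = 0 := by
    rintro r ⟨⟨hr, hrR⟩, hr'⟩
    have hrd : r ≤ d - ρ := le_of_not_gt fun h => hr' ⟨h, hrR⟩
    have hu : 1 ≤ u r := by
      rw [le_div_iff₀ (by positivity)]
      nlinarith
    rw [arccos_eq_zero.2 hu, mul_zero, mul_zero]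
  rw [setIntegral_comp_norm_of_subset_closedBall
      (measurableSet_closedBall.inter measurableSet_closedBall) inter_subset_left hF hFC,
    setIntegral_congr_fun measurableSet_Ioc hangles,
    setIntegral_eq_of_subset_of_forall_sdiff_eq_zero measurableSet_Ioc
      (Ioc_subset_Ioc_left (by linarith)) hvanish,
    intervalIntegral.integral_of_le hR, integral_const_mul]

theorem Q_single_integral_case2_middle_general (r_I R_p R_I d : ℝ)
    (hrI : 0 < r_I) (hRp : 0 < R_p) (hRI : 0 < R_I)
    (hdR : R_I < d)
    (h1 : d - R_I < r_I + R_p)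
    (a b : EuclideanSpace ℝ (Fin 2)) (hab : dist a b = d) :
    (∫ x in closedBall a (r_I + R_p) \ closedBall b R_I,
        SI ‖x - a‖ R_p r_I / (π * R_p ^ 2))
      = π * r_I ^ 2
        - 2 * ∫ r in (d - R_I)..(r_I + R_p),
            (SI r R_p r_I / (π * R_p ^ 2)) * r *
              arccos ((d ^ 2 + r ^ 2 - R_I ^ 2) / (2 * d * r)) := by
  set F : ℝ → ℝ := fun r => SI r R_p r_I / (π * R_p ^ 2)
  have hF : Measurable F := (measurable_SI R_p r_I).div_const _
  have hFC (r : ℝ) : |F r| ≤ π * r_I ^ 2 / (π * R_p ^ 2) := by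
    rw [abs_of_nonneg (div_nonneg (SI_nonneg _ _ _) (by positivity))]
    exact div_le_div_of_nonneg_right (SI_le r R_p hrI.le) (by positivity)
  have hint : IntegrableOn (fun y : ℝ² => F ‖y‖) (closedBall (0 : ℝ²) (r_I + R_p)) :=
    Measure.integrableOn_of_bounded measure_closedBall_lt_top.ne
      (hF.comp measurable_norm).aestronglyMeasurable (.of_forall fun y => hFC ‖y‖)
  set e : ℝ² := EuclideanSpace.single (0 : Fin 2) d
  have hdist : dist a b = dist 0 e := by simp [e, hab, abs_of_pos (hRI.trans hdR)]
  calc ∫ x in closedBall a (r_I + R_p) \ closedBall b R_I, F ‖x - a‖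
      = ∫ y in closedBall 0 (r_I + R_p) \ closedBall e R_I, F ‖y‖ := by
        simpa only [dist_eq_norm, sub_zero] using
          setIntegral_closedBall_sdiff_closedBall_comp_dist hdist F (r_I + R_p) R_I
    _ = (∫ y in closedBall (0 : ℝ²) (r_I + R_p), F ‖y‖)
        - ∫ y in closedBall 0 (r_I + R_p) ∩ closedBall e R_I, F ‖y‖ := by
        rw [← sdiff_self_inter, setIntegral_sdiff
          (measurableSet_closedBall.inter measurableSet_closedBall) hint inter_subset_left]
    _ = _ := by
        rw [setIntegral_lens_comp_norm hF hFC hRI.le hdR h1.le, integral_div,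
          setIntegral_closedBall_SI_norm hRp.le hrI.le, mul_div_cancel_left₀ _ (by positivity)]

/-- Case 2 (middle subcase) of the reduction of the double integral `Q` to a single
radial integral: `0 < R_I < d` and `d − R_I < r_I + R_p < d + R_I`. -/
theorem Q_single_integral_case2_middle (r_I R_p R_I d : ℝ)
    (hrI : 0 < r_I) (hRp : 0 < R_p) (hRI : 0 < R_I)
    (hdR : R_I < d)
    (h1 : d - R_I < r_I + R_p) (h2 : r_I + R_p < d + R_I)
    (a b : EuclideanSpace ℝ (Fin 2)) (hab : dist a b = d) :
    (∫ x in closedBall a (r_I + R_p) \ closedBall b R_I,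
        SI ‖x - a‖ R_p r_I / (π * R_p ^ 2))
      = π * r_I ^ 2
        - 2 * ∫ r in (d - R_I)..(r_I + R_p),
            (SI r R_p r_I / (π * R_p ^ 2)) * r *
              arccos ((d ^ 2 + r ^ 2 - R_I ^ 2) / (2 * d * r)) :=
  Q_single_integral_case2_middle_general r_I R_p R_I d hrI hRp hRI hdR h1 a b hab
end

section
/- Fix R_I > 0, β ∈ (0, 1), γ ∈ (0, 1), and μ > 0; set R_p = β R_I, and for each r_I > 0 set d = γ r_I and r_D = R_I. Then P_F(r_I) → 0 and P_MD(r_I) → 0 as r_I → 0⁺; i.e., the closed-form operating point (P_F, P_D) = (P_F, 1 − P_MD) of listen-before-talk with detection range r_D = R_I approaches the perfect point (0, 1) as r_I/R_I → 0. (Paper's Theorem 2, small-power regime, stated for the closed-form expressions of Proposition 2.) -/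
open MeasureTheory Metric Real Filter

/-- Closed-form false-alarm probability of listen-before-talk (Proposition 2, eq. (6)):
`P_F = 1 − exp(−μ(π r_D² − S_I(d, r_D, R_I) − ∫_{S_o(r_D)} g))`, where
`g(x) = S_I(‖x − a‖, R_p, r_I)/(π R_p²)` and `S_o(r_D) = D(a, min(r_D, r_I+R_p)) \ D(b, R_I)`. -/
noncomputable def pF (a b : EuclideanSpace ℝ (Fin 2)) (μ R_p R_I r_I d r_D : ℝ) : ℝ :=
  1 - Real.exp (-μ * (π * r_D ^ 2 - SI d r_D R_I -
    ∫ x in closedBall a (min r_D (r_I + R_p)) \ closedBall b R_I,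
      SI ‖x - a‖ R_p r_I / (π * R_p ^ 2)))

/-- Closed-form miss-detection probability of listen-before-talk (Proposition 2, eq. (7)). -/
noncomputable def pMD (a b : EuclideanSpace ℝ (Fin 2)) (μ R_p R_I r_I d r_D : ℝ) : ℝ :=
  (Real.exp (-μ * (π * r_D ^ 2)) -
    Real.exp (-μ * (π * (r_D ^ 2 + R_I ^ 2) - SI d r_D R_I +
      ∫ x in (closedBall a (r_I + R_p) \ closedBall b R_I) \
              (closedBall a (min r_D (r_I + R_p)) \ closedBall b R_I),
        SI ‖x - a‖ R_p r_I / (π * R_p ^ 2)))) /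
  (1 - Real.exp (-μ * ((∫ x in closedBall a (r_I + R_p) \ closedBall b R_I,
      SI ‖x - a‖ R_p r_I / (π * R_p ^ 2)) + π * R_I ^ 2)))

open Topology

/-!
Once `r_I + R_p + d < R_I`, which holds for small `r_I` because `R_p = β R_I < R_I` and
`d = γ r_I → 0`, the disk `D(a, r_I + R_p)` lies inside `D(b, R_I)`, so every integration
region in `P_F` and `P_MD` is empty. What remains depends on `r_I` only through
`S_I(γ r_I, R_I, R_I)`, the overlap of two disks of radius `R_I` with merging centers, which
tends to the full area `π R_I²`; at that value both closed forms vanish.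
-/

lemma measureReal_closedBall_fin_two (x : EuclideanSpace ℝ (Fin 2)) {r : ℝ} (hr : 0 ≤ r) :
    volume.real (closedBall x r) = π * r ^ 2 := by
  simp [measureReal_def, hr, pi_pos.le, mul_comm]

lemma SI_le_pi_mul_sq (d R : ℝ) {r : ℝ} (hr : 0 ≤ r) : SI d r R ≤ π * r ^ 2 := by
  rw [SI, ← measureReal_def, ← measureReal_closedBall_fin_two 0 hr]
  exact measureReal_mono Set.inter_subset_left measure_closedBall_lt_top.ne

lemma pi_mul_sub_abs_sq_le_SI {d r : ℝ} (hd : |d| ≤ r) : π * (r - |d|) ^ 2 ≤ SI d r r := by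
  rw [SI, ← measureReal_def, ← measureReal_closedBall_fin_two 0 (sub_nonneg.2 hd)]
  refine measureReal_mono (Set.subset_inter ?_ ?_)
    ((measure_mono Set.inter_subset_left).trans_lt measure_closedBall_lt_top).ne
  · exact closedBall_subset_closedBall (by linarith [abs_nonneg d])
  · refine closedBall_subset_closedBall' ?_
    rw [dist_zero_left, PiLp.norm_single, Real.norm_eq_abs]
    linarith

lemma tendsto_SI_nhds_zero {r : ℝ} (hr : 0 < r) :
    Tendsto (fun d => SI d r r) (𝓝 0) (𝓝 (π * r ^ 2)) := by
  have hlower : Tendsto (fun d : ℝ => π * (r - |d|) ^ 2) (𝓝 0) (𝓝 (π * r ^ 2)) := by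
    simpa using ((by fun_prop : Continuous fun d : ℝ => π * (r - |d|) ^ 2).tendsto 0)
  refine tendsto_of_tendsto_of_tendsto_of_le_of_le' hlower tendsto_const_nhds ?_
    (Eventually.of_forall fun d => SI_le_pi_mul_sq d r hr.le)
  filter_upwards [ball_mem_nhds 0 hr] with d hd
  rw [mem_ball, Real.dist_0_eq_abs] at hd
  exact pi_mul_sub_abs_sq_le_SI hd.le

section CoveredInterferenceRegion

variable {a b : EuclideanSpace ℝ (Fin 2)} {μ R_p R_I r_I : ℝ}

lemma pF_of_closedBall_subset (h : closedBall a (r_I + R_p) ⊆ closedBall b R_I) (d r_D : ℝ) :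
    pF a b μ R_p R_I r_I d r_D = 1 - Real.exp (-μ * (π * r_D ^ 2 - SI d r_D R_I)) := by
  have hempty : closedBall a (min r_D (r_I + R_p)) \ closedBall b R_I = ∅ :=
    Set.sdiff_eq_empty.2 ((closedBall_subset_closedBall (min_le_right _ _)).trans h)
  simp [pF, hempty]

lemma pMD_of_closedBall_subset (h : closedBall a (r_I + R_p) ⊆ closedBall b R_I) (d r_D : ℝ) :
    pMD a b μ R_p R_I r_I d r_D =
      (Real.exp (-μ * (π * r_D ^ 2)) -
        Real.exp (-μ * (π * (r_D ^ 2 + R_I ^ 2) - SI d r_D R_I))) /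
      (1 - Real.exp (-μ * (π * R_I ^ 2))) := by
  simp [pMD, Set.sdiff_eq_empty.2 h]

end CoveredInterferenceRegion

theorem lbt_perfect_detection_small_power_general (R_I β γ μ : ℝ)
    (hRI : 0 < R_I) (hβ : β ∈ Set.Ioo (0:ℝ) 1)
    (a b : ℝ → EuclideanSpace ℝ (Fin 2))
    (hab : ∀ r_I : ℝ, 0 < r_I → dist (a r_I) (b r_I) = γ * r_I) :
    Tendsto (fun r_I : ℝ => pF (a r_I) (b r_I) μ (β * R_I) R_I r_I (γ * r_I) R_I)
      (nhdsWithin 0 (Set.Ioi 0)) (nhds 0) ∧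
    Tendsto (fun r_I : ℝ => pMD (a r_I) (b r_I) μ (β * R_I) R_I r_I (γ * r_I) R_I)
      (nhdsWithin 0 (Set.Ioi 0)) (nhds 0) := by
  have hcovered : ∀ᶠ r in 𝓝[>] 0, closedBall (a r) (r + β * R_I) ⊆ closedBall (b r) R_I := by
    have hradius : Tendsto (fun r : ℝ => r + β * R_I + γ * r) (𝓝[>] 0) (𝓝 (β * R_I)) := by
      simpa using ((by fun_prop : Continuous fun r : ℝ => r + β * R_I + γ * r).tendsto 0).mono_left
        nhdsWithin_le_nhds
    filter_upwards [hradius.eventually_lt_const (by nlinarith [hβ.2]), self_mem_nhdsWithin]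
      with r hr hpos
    exact closedBall_subset_closedBall' (by rw [hab r hpos]; linarith)
  have hSI : Tendsto (fun r => SI (γ * r) R_I R_I) (𝓝[>] 0) (𝓝 (π * R_I ^ 2)) := by
    refine (tendsto_SI_nhds_zero hRI).comp ?_
    simpa using ((continuous_const_mul γ).tendsto 0).mono_left nhdsWithin_le_nhds
  constructor
  · refine Tendsto.congr' (hcovered.mono fun r hr => (pF_of_closedBall_subset hr _ _).symm) ?_
    have hlimit := ((by fun_prop : Continuous fun t => 1 - Real.exp (-μ * (π * R_I ^ 2 - t))).tendsto
      _).comp hSI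
    rwa [sub_self, mul_zero, Real.exp_zero, sub_self] at hlimit
  · refine Tendsto.congr' (hcovered.mono fun r hr => (pMD_of_closedBall_subset hr _ _).symm) ?_
    have hlimit := ((by fun_prop : Continuous fun t => (Real.exp (-μ * (π * R_I ^ 2)) -
        Real.exp (-μ * (π * (R_I ^ 2 + R_I ^ 2) - t))) / (1 - Real.exp (-μ * (π * R_I ^ 2)))).tendsto
      _).comp hSI
    rwa [show π * (R_I ^ 2 + R_I ^ 2) - π * R_I ^ 2 = π * R_I ^ 2 by ring, sub_self,
      zero_div] at hlimit

/-- Paper's Theorem 2, small-power regime: with `R_p = β R_I`, `d = γ r_I` and detection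
range `r_D = R_I`, both `P_F → 0` and `P_MD → 0` as `r_I → 0⁺`. -/
theorem lbt_perfect_detection_small_power (R_I β γ μ : ℝ)
    (hRI : 0 < R_I) (hβ : β ∈ Set.Ioo (0:ℝ) 1) (hγ : γ ∈ Set.Ioo (0:ℝ) 1) (hμ : 0 < μ)
    (a b : ℝ → EuclideanSpace ℝ (Fin 2))
    (hab : ∀ r_I : ℝ, 0 < r_I → dist (a r_I) (b r_I) = γ * r_I) :
    Tendsto (fun r_I : ℝ => pF (a r_I) (b r_I) μ (β * R_I) R_I r_I (γ * r_I) R_I)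
      (nhdsWithin 0 (Set.Ioi 0)) (nhds 0) ∧
    Tendsto (fun r_I : ℝ => pMD (a r_I) (b r_I) μ (β * R_I) R_I r_I (γ * r_I) R_I)
      (nhdsWithin 0 (Set.Ioi 0)) (nhds 0) :=
  lbt_perfect_detection_small_power_general R_I β γ μ hRI hβ a b hab
end
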